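/- Let M be a Hölder continuous function on Σ_A taking values in the set of d×d matrices with all entries positive, fix q ∈ ℝ, and let p ≥ 1 be such that A^p has all entries positive. Then there exists a constant C ≥ 1 such that for every ℓ > p: C^{−1} s_{ℓ−p}(q) ≤ s_ℓ(q) ≤ C s_{ℓ−p}(q). -/

import Mathlib

open Filter MeasureTheory
open scoped Classical BigOperators Topology ENNReal

/-- The left shift on `Σ = {1,…,m}^ℕ`, modelled as `ℕ → Fin m`. -/
def shift {m : ℕ} (x : ℕ → Fin m) : ℕ → Fin m := fun k => x (k + 1)

/-- The subshift of finite type `Σ_A` determined by a 0-1 matrix `A`. -/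
def SigmaA {m : ℕ} (A : Matrix (Fin m) (Fin m) ℕ) : Set (ℕ → Fin m) :=
  {x | ∀ k : ℕ, A (x k) (x (k + 1)) = 1}

/-- Admissibility of a word `J ∈ Σ_{A,n}` (a word of length `n` over `{1,…,m}`). -/
def Adm {m : ℕ} (A : Matrix (Fin m) (Fin m) ℕ) {n : ℕ} (J : Fin n → Fin m) : Prop :=
  ∀ (i : ℕ) (h : i + 1 < n), A (J ⟨i, Nat.lt_of_succ_lt h⟩) (J ⟨i + 1, h⟩) = 1

/-- The (finite) set `Σ_{A,n}` of admissible words of length `n`. -/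
noncomputable def admWords {m : ℕ} (A : Matrix (Fin m) (Fin m) ℕ) (n : ℕ) :
    Finset (Fin n → Fin m) :=
  Finset.univ.filter fun J => Adm A J

/-- The cylinder set `[J] ⊆ Σ_A` of a word `J`. -/
def cylinder {m : ℕ} (A : Matrix (Fin m) (Fin m) ℕ) {n : ℕ} (J : Fin n → Fin m) :
    Set (ℕ → Fin m) :=
  {x | x ∈ SigmaA A ∧ ∀ i : Fin n, x (i : ℕ) = J i}

/-- `‖B‖ = 1ᵗ B 1`, the sum of all entries of `B`. -/
def matNorm {d : ℕ} (B : Matrix (Fin d) (Fin d) ℝ) : ℝ := ∑ i, ∑ j, B i j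

/-- The product `M(x) M(σx) ⋯ M(σ^{n-1}x)`. -/
noncomputable def Mprod {m d : ℕ} (M : (ℕ → Fin m) → Matrix (Fin d) (Fin d) ℝ)
    (x : ℕ → Fin m) (n : ℕ) : Matrix (Fin d) (Fin d) ℝ :=
  (((List.range n).map fun i => M (shift^[i] x))).prod

/-- `s_n(J,q) = sup_{x ∈ [J]} ‖M(x)⋯M(σ^{n-1}x)‖^q`. -/
noncomputable def sWord {m d : ℕ} (A : Matrix (Fin m) (Fin m) ℕ)
    (M : (ℕ → Fin m) → Matrix (Fin d) (Fin d) ℝ) (q : ℝ) {n : ℕ} (J : Fin n → Fin m) : ℝ :=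
  sSup ((fun x => matNorm (Mprod M x n) ^ q) '' cylinder A J)

/-- `s_n(q) = Σ_{J ∈ Σ_{A,n}} s_n(J,q)`. -/
noncomputable def sSum {m d : ℕ} (A : Matrix (Fin m) (Fin m) ℕ)
    (M : (ℕ → Fin m) → Matrix (Fin d) (Fin d) ℝ) (q : ℝ) (n : ℕ) : ℝ :=
  ∑ J ∈ admWords A n, sWord A M q J

/-- `M` is Hölder continuous on `Σ_A` with respect to the metric `d(x,y) = m^{-n(x,y)}`:
entrywise, `|M(x)_{ij} - M(y)_{ij}| ≤ C (m^{-α})^n` whenever `x, y` agree on the first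
`n` coordinates. -/
def HolderM {m d : ℕ} (A : Matrix (Fin m) (Fin m) ℕ)
    (M : (ℕ → Fin m) → Matrix (Fin d) (Fin d) ℝ) : Prop :=
  ∃ C > (0:ℝ), ∃ a : ℝ, 0 < a ∧ a < 1 ∧
    ∀ x ∈ SigmaA A, ∀ y ∈ SigmaA A, ∀ n : ℕ, (∀ k < n, x k = y k) →
      ∀ i j, |M x i j - M y i j| ≤ C * a ^ n

/-- `A` is a 0-1 matrix. -/
def ZeroOne {m : ℕ} (A : Matrix (Fin m) (Fin m) ℕ) : Prop :=
  ∀ i j, A i j = 0 ∨ A i j = 1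

/-- `A` is primitive: some power of `A` has all entries positive. -/
def Primitive {m : ℕ} (A : Matrix (Fin m) (Fin m) ℕ) : Prop :=
  ∃ p : ℕ, 1 ≤ p ∧ ∀ i j, 0 < (A ^ p) i j

/-- `M` takes values in the positive `d × d` matrices (on `Σ_A`). -/
def PosM {m d : ℕ} (A : Matrix (Fin m) (Fin m) ℕ)
    (M : (ℕ → Fin m) → Matrix (Fin d) (Fin d) ℝ) : Prop :=
  ∀ x ∈ SigmaA A, ∀ i j, 0 < M x i j

/-! ### Auxiliary lemmas -/

section Aux
variable {m d : ℕ} {A : Matrix (Fin m) (Fin m) ℕ}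
  {M : (ℕ → Fin m) → Matrix (Fin d) (Fin d) ℝ}

lemma shift_mem {x : ℕ → Fin m} (hx : x ∈ SigmaA A) : shift x ∈ SigmaA A :=
  fun k => hx (k + 1)

lemma shift_iter_mem {x : ℕ → Fin m} (hx : x ∈ SigmaA A) (n : ℕ) :
    shift^[n] x ∈ SigmaA A := by
  induction n with
  | zero => exact hx
  | succ k ih => rw [Function.iterate_succ_apply']; exact shift_mem ih

lemma Mprod_zero (x : ℕ → Fin m) : Mprod M x 0 = 1 := by simp [Mprod]

lemma Mprod_succ (x : ℕ → Fin m) (n : ℕ) :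
    Mprod M x (n + 1) = M x * Mprod M (shift x) n := by
  unfold Mprod
  rw [List.range_succ_eq_map, List.map_cons, List.prod_cons, List.map_map]
  simp only [Function.iterate_zero, id_eq]
  have : ((fun i => M (shift^[i] x)) ∘ Nat.succ) = fun i => M (shift^[i] (shift x)) := by
    ext i
    simp [Function.comp, Function.iterate_succ_apply]
  rw [this]

lemma Mprod_add (x : ℕ → Fin m) (a b : ℕ) :
    Mprod M x (a + b) = Mprod M x a * Mprod M (shift^[a] x) b := by
  induction a generalizing x with
  | zero => simp [Mprod_zero]
  | succ k ih =>
      have h : k + 1 + b = (k + b) + 1 := by omega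
      rw [h, Mprod_succ, Mprod_succ, ih (shift x), mul_assoc]
      rfl

/-- Extension of an admissible word to an infinite admissible sequence. -/
noncomputable def extSeq (nf : Fin m → Fin m) (i0 : Fin m) {n : ℕ} (J : Fin n → Fin m) :
    ℕ → Fin m
  | 0 => if h : 0 < n then J ⟨0, h⟩ else i0
  | (k + 1) => if h : k + 1 < n then J ⟨k + 1, h⟩ else nf (extSeq nf i0 J k)

lemma extSeq_agree (nf : Fin m → Fin m) (i0 : Fin m) {n : ℕ} (J : Fin n → Fin m)
    (k : ℕ) (h : k < n) : extSeq nf i0 J k = J ⟨k, h⟩ := by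
  cases k with
  | zero => simp [extSeq, h]
  | succ k => simp [extSeq, h]

lemma exists_next (hA01 : ZeroOne A) {p : ℕ}
    (hAp : ∀ i j, 0 < (A ^ p) i j) (hp : 1 ≤ p) (i : Fin m) : ∃ j, A i j = 1 := by
  obtain ⟨pp, rfl⟩ : ∃ pp, p = pp + 1 := ⟨p - 1, by omega⟩
  have h := hAp i i
  rw [pow_succ', Matrix.mul_apply] at h
  by_contra hc
  push_neg at hc
  have hz : ∀ k, A i k * (A ^ pp) k i = 0 := by
    intro k
    rcases hA01 i k with h0 | h1
    · simp [h0]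
    · exact absurd h1 (hc k)
  simp [Finset.sum_congr rfl fun k _ => hz k] at h

lemma extSeq_mem (nf : Fin m → Fin m)
    (hnf : ∀ i, A i (nf i) = 1) (i0 : Fin m) {n : ℕ} (J : Fin n → Fin m)
    (hJ : Adm A J) : extSeq nf i0 J ∈ SigmaA A := by
  intro k
  by_cases h : k + 1 < n
  · rw [extSeq_agree nf i0 J k (by omega), extSeq_agree nf i0 J (k + 1) h]
    exact hJ k h
  · have h2 : extSeq nf i0 J (k + 1) = nf (extSeq nf i0 J k) := by simp [extSeq, h]
    rw [h2]
    exact hnf _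

lemma sigmaA_isCompact : IsCompact (SigmaA A) := by
  have hcl : IsClosed (SigmaA A) := by
    have h : SigmaA A = ⋂ k : ℕ, {x : ℕ → Fin m | A (x k) (x (k + 1)) = 1} := by
      ext x; simp [SigmaA, Set.mem_iInter]
    rw [h]
    refine isClosed_iInter fun k => ?_
    have hc : Continuous fun x : ℕ → Fin m => (x k, x (k + 1)) :=
      (continuous_apply k).prodMk (continuous_apply (k + 1))
    exact IsClosed.preimage hc (isClosed_discrete {p : Fin m × Fin m | A p.1 p.2 = 1})
  exact hcl.isCompact

lemma entry_contOn (hHolder : HolderM A M) (i j : Fin d) :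
    ContinuousOn (fun x => M x i j) (SigmaA A) := by
  obtain ⟨Ch, hCh, a, ha0, ha1, hH⟩ := hHolder
  intro x hx
  rw [ContinuousWithinAt, Metric.tendsto_nhds]
  intro ε hε
  have htend : Tendsto (fun n : ℕ => Ch * a ^ n) atTop (nhds 0) := by
    simpa using (tendsto_pow_atTop_nhds_zero_of_lt_one ha0.le ha1).const_mul Ch
  obtain ⟨n, hn⟩ := (htend.eventually (gt_mem_nhds hε)).exists
  have hUeq : {y : ℕ → Fin m | ∀ k < n, y k = x k}
      = ⋂ k ∈ Set.Iio n, {y : ℕ → Fin m | y k = x k} := by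
    ext y; simp [Set.mem_iInter]
  have hU : IsOpen {y : ℕ → Fin m | ∀ k < n, y k = x k} := by
    rw [hUeq]
    refine (Set.finite_Iio n).isOpen_biInter fun k _ => ?_
    exact IsOpen.preimage (continuous_apply (A := fun _ : ℕ => Fin m) k)
      (isOpen_discrete {x k})
  have hxU : x ∈ {y : ℕ → Fin m | ∀ k < n, y k = x k} := fun k _ => rfl
  filter_upwards [mem_nhdsWithin_of_mem_nhds (hU.mem_nhds hxU), self_mem_nhdsWithin]
    with y hyU hyS
  have hb := hH y hyS x hx n (fun k hk => hyU k hk) i j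
  calc dist (M y i j) (M x i j) = |M y i j - M x i j| := Real.dist_eq _ _
    _ ≤ Ch * a ^ n := hb
    _ < ε := hn

lemma exists_lower (hd : 1 ≤ d) (hne : (SigmaA A).Nonempty)
    (hpos : PosM A M) (hHolder : HolderM A M) :
    ∃ c : ℝ, 0 < c ∧ ∀ x ∈ SigmaA A, ∀ i j, c ≤ M x i j := by
  haveI : NeZero d := ⟨by omega⟩
  have h : ∀ ij : Fin d × Fin d, ∃ z ∈ SigmaA A,
      ∀ x ∈ SigmaA A, M z ij.1 ij.2 ≤ M x ij.1 ij.2 := by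
    intro ij
    obtain ⟨z, hz, hmin⟩ := sigmaA_isCompact.exists_isMinOn hne
      (entry_contOn hHolder ij.1 ij.2)
    exact ⟨z, hz, fun x hx => hmin hx⟩
  choose z hz hzmin using h
  refine ⟨Finset.univ.inf' Finset.univ_nonempty (fun ij => M (z ij) ij.1 ij.2), ?_, ?_⟩
  · rw [Finset.lt_inf'_iff]
    exact fun ij _ => hpos (z ij) (hz ij) ij.1 ij.2
  · intro x hx i j
    calc Finset.univ.inf' Finset.univ_nonempty (fun ij => M (z ij) ij.1 ij.2)
        ≤ M (z (i, j)) i j := Finset.inf'_le _ (Finset.mem_univ (i, j))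
      _ ≤ M x i j := hzmin (i, j) x hx

lemma exists_upper (hd : 1 ≤ d) (hne : (SigmaA A).Nonempty) (hHolder : HolderM A M) :
    ∃ K : ℝ, ∀ x ∈ SigmaA A, ∀ i j, M x i j ≤ K := by
  haveI : NeZero d := ⟨by omega⟩
  obtain ⟨Ch, hCh, a, ha0, ha1, hH⟩ := hHolder
  obtain ⟨x0, hx0⟩ := hne
  refine ⟨Ch + Finset.univ.sup' Finset.univ_nonempty
    (fun ij : Fin d × Fin d => M x0 ij.1 ij.2), fun x hx i j => ?_⟩
  have hb := hH x hx x0 hx0 0 (by omega) i j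
  simp only [pow_zero, mul_one] at hb
  have h1 : M x i j ≤ M x0 i j + Ch := by
    have h2 := abs_le.mp hb
    linarith [h2.2]
  have h2 : M x0 i j ≤ Finset.univ.sup' Finset.univ_nonempty
      (fun ij : Fin d × Fin d => M x0 ij.1 ij.2) :=
    Finset.le_sup' (fun ij : Fin d × Fin d => M x0 ij.1 ij.2) (Finset.mem_univ (i, j))
  linarith

lemma Mprod_nonneg (hM : ∀ x ∈ SigmaA A, ∀ i j, 0 ≤ M x i j)
    {x : ℕ → Fin m} (hx : x ∈ SigmaA A) (n : ℕ) :
    ∀ i j, 0 ≤ Mprod M x n i j := by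
  induction n generalizing x with
  | zero =>
      intro i j
      rw [Mprod_zero, Matrix.one_apply]
      split <;> norm_num
  | succ k ih =>
      intro i j
      rw [Mprod_succ, Matrix.mul_apply]
      exact Finset.sum_nonneg fun k' _ =>
        mul_nonneg (hM x hx i k') (ih (shift_mem hx) k' j)

lemma Mprod_entry_bounds {c K : ℝ} (hc : 0 < c) (hd : 1 ≤ d)
    (hlow : ∀ x ∈ SigmaA A, ∀ i j, c ≤ M x i j)
    (hup : ∀ x ∈ SigmaA A, ∀ i j, M x i j ≤ K) :
    ∀ n, ∀ x ∈ SigmaA A, ∀ i j,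
      c * (c * d) ^ n ≤ Mprod M x (n + 1) i j ∧ Mprod M x (n + 1) i j ≤ K * (K * d) ^ n := by
  intro n
  induction n with
  | zero =>
      intro x hx i j
      have h1 : Mprod M x 1 = M x * 1 := by rw [show (1:ℕ) = 0 + 1 from rfl, Mprod_succ, Mprod_zero]
      rw [h1, mul_one]
      simpa using ⟨hlow x hx i j, hup x hx i j⟩
  | succ k ih =>
      intro x hx i j
      have hK : 0 < K := lt_of_lt_of_le hc ((hlow x hx i j).trans (hup x hx i j))
      have hP := ih (shift x) (shift_mem hx)
      have h1 : Mprod M x (k + 2) = M x * Mprod M (shift x) (k + 1) := Mprod_succ x (k + 1)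
      rw [h1, Matrix.mul_apply]
      have hlow' : ∀ k' : Fin d, c * (c * (c * ↑d) ^ k) ≤ M x i k' * Mprod M (shift x) (k + 1) k' j := by
        intro k'
        have h1' := (hP k' j).1
        have h2 := hlow x hx i k'
        have hpos : (0:ℝ) <= c * (c * (d:ℝ)) ^ k := by positivity
        exact mul_le_mul h2 h1' hpos (by linarith)
      have hup' : ∀ k' : Fin d, M x i k' * Mprod M (shift x) (k + 1) k' j ≤ K * (K * (K * ↑d) ^ k) := by
        intro k'
        have h3 := (hP k' j).2
        have h4 := hup x hx i k'
        have h5 : (0:ℝ) ≤ Mprod M (shift x) (k + 1) k' j := by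
          have h1' := (hP k' j).1
          have hpos : (0:ℝ) <= c * (c * (d:ℝ)) ^ k := by positivity
          linarith
        exact mul_le_mul h4 h3 h5 hK.le
      constructor
      · calc c * (c * ↑d) ^ (k + 1) = ↑d * (c * (c * (c * ↑d) ^ k)) := by ring
          _ = ∑ _k' : Fin d, c * (c * (c * ↑d) ^ k) := by
              rw [Finset.sum_const, Finset.card_univ, Fintype.card_fin, nsmul_eq_mul]
          _ ≤ ∑ k', M x i k' * Mprod M (shift x) (k + 1) k' j :=
              Finset.sum_le_sum fun k' _ => hlow' k'
      · calc (∑ k', M x i k' * Mprod M (shift x) (k + 1) k' j)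
            ≤ ∑ _k' : Fin d, K * (K * (K * ↑d) ^ k) :=
              Finset.sum_le_sum fun k' _ => hup' k'
          _ = ↑d * (K * (K * (K * ↑d) ^ k)) := by
              rw [Finset.sum_const, Finset.card_univ, Fintype.card_fin, nsmul_eq_mul]
          _ = K * (K * ↑d) ^ (k + 1) := by ring

lemma matNorm_bounds {B : Matrix (Fin d) (Fin d) ℝ} {u1 u2 : ℝ}
    (h : ∀ i j, u1 ≤ B i j ∧ B i j ≤ u2) :
    (d : ℝ) ^ 2 * u1 ≤ matNorm B ∧ matNorm B ≤ (d : ℝ) ^ 2 * u2 := by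
  have e1 : ∀ u : ℝ, ∑ _i : Fin d, ∑ _j : Fin d, u = (d : ℝ) ^ 2 * u := by
    intro u
    simp only [Finset.sum_const, Finset.card_univ, Fintype.card_fin, nsmul_eq_mul]
    ring
  constructor
  · have h2 : ∑ _i : Fin d, ∑ _j : Fin d, u1 ≤ matNorm B :=
      Finset.sum_le_sum fun i _ => Finset.sum_le_sum fun j _ => (h i j).1
    rw [e1 u1] at h2
    exact h2
  · have h2 : matNorm B ≤ ∑ _i : Fin d, ∑ _j : Fin d, u2 :=
      Finset.sum_le_sum fun i _ => Finset.sum_le_sum fun j _ => (h i j).2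
    rw [e1 u2] at h2
    exact h2

lemma matNorm_mul_bounds {B B' : Matrix (Fin d) (Fin d) ℝ} {D1 D2 : ℝ}
    (hD1 : 0 ≤ D1) (hB : ∀ i j, 0 ≤ B i j) (hB' : ∀ i j, D1 ≤ B' i j ∧ B' i j ≤ D2) :
    (d : ℝ) * D1 * matNorm B ≤ matNorm (B * B') ∧
      matNorm (B * B') ≤ (d : ℝ) * D2 * matNorm B := by
  have he : matNorm (B * B') = ∑ i, ∑ j, ∑ k, B i k * B' k j := by
    simp [matNorm, Matrix.mul_apply]
  constructor
  · rw [he]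
    calc (d : ℝ) * D1 * matNorm B = ∑ i, ∑ _j : Fin d, ∑ k, B i k * D1 := by
          rw [matNorm, Finset.mul_sum]
          refine Finset.sum_congr rfl fun i _ => ?_
          rw [Finset.sum_const, Finset.card_univ, Fintype.card_fin, nsmul_eq_mul,
            ← Finset.sum_mul]
          ring
      _ ≤ ∑ i, ∑ j, ∑ k, B i k * B' k j :=
          Finset.sum_le_sum fun i _ => Finset.sum_le_sum fun j _ =>
            Finset.sum_le_sum fun k _ =>
              mul_le_mul_of_nonneg_left (hB' k j).1 (hB i k)
  · rw [he]
    calc (∑ i, ∑ j, ∑ k, B i k * B' k j) ≤ ∑ i, ∑ _j : Fin d, ∑ k, B i k * D2 :=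
          Finset.sum_le_sum fun i _ => Finset.sum_le_sum fun j _ =>
            Finset.sum_le_sum fun k _ =>
              mul_le_mul_of_nonneg_left (hB' k j).2 (hB i k)
      _ = (d : ℝ) * D2 * matNorm B := by
          rw [matNorm, Finset.mul_sum]
          refine (Finset.sum_congr rfl fun i _ => ?_).symm
          rw [Finset.sum_const, Finset.card_univ, Fintype.card_fin, nsmul_eq_mul,
            ← Finset.sum_mul]
          ring

lemma rpow_sandwich {q g1 g2 u v : ℝ} (hg1 : 0 < g1) (hv : 0 < v)
    (hl : g1 * v ≤ u) (hu : u ≤ g2 * v) :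
    min (g1 ^ q) (g2 ^ q) * v ^ q ≤ u ^ q ∧
      u ^ q ≤ max (g1 ^ q) (g2 ^ q) * v ^ q := by
  have hg2 : 0 < g2 := by nlinarith
  have hu0 : 0 < u := lt_of_lt_of_le (by positivity) hl
  have ht1 : g1 ≤ u / v := (le_div_iff₀ hv).mpr hl
  have ht2 : u / v ≤ g2 := (div_le_iff₀ hv).mpr hu
  have ht0 : 0 < u / v := by positivity
  have key : u ^ q = (u / v) ^ q * v ^ q := by
    rw [← Real.mul_rpow (le_of_lt ht0) hv.le, div_mul_cancel₀ _ hv.ne']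
  rcases le_or_gt 0 q with hq | hq
  · have h1 : g1 ^ q ≤ (u / v) ^ q := Real.rpow_le_rpow hg1.le ht1 hq
    have h2 : (u / v) ^ q ≤ g2 ^ q := Real.rpow_le_rpow ht0.le ht2 hq
    constructor
    · rw [key]
      exact mul_le_mul_of_nonneg_right ((min_le_left _ _).trans h1) (Real.rpow_nonneg hv.le q)
    · rw [key]
      exact mul_le_mul_of_nonneg_right (h2.trans (le_max_right _ _)) (Real.rpow_nonneg hv.le q)
  · have h1 : (u / v) ^ q ≤ g1 ^ q := Real.rpow_le_rpow_of_nonpos hg1 ht1 hq.le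
    have h2 : g2 ^ q ≤ (u / v) ^ q := Real.rpow_le_rpow_of_nonpos ht0 ht2 hq.le
    constructor
    · rw [key]
      exact mul_le_mul_of_nonneg_right ((min_le_right _ _).trans h2) (Real.rpow_nonneg hv.le q)
    · rw [key]
      exact mul_le_mul_of_nonneg_right (h1.trans (le_max_left _ _)) (Real.rpow_nonneg hv.le q)

lemma geom_bound {a : ℝ} (ha0 : 0 ≤ a) (ha1 : a < 1) (n : ℕ) :
    ∑ k ∈ Finset.range n, a ^ (k + 1) ≤ (1 - a)⁻¹ := by
  have h1a : 0 < 1 - a := by linarith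
  have h1 : ∑ k ∈ Finset.range n, a ^ (k + 1) ≤ ∑ k ∈ Finset.range n, a ^ k :=
    Finset.sum_le_sum fun k _ => pow_le_pow_of_le_one ha0 ha1.le (by omega)
  have h2 := geom_sum_mul a n
  have h3 : (∑ k ∈ Finset.range n, a ^ k) * (1 - a) = 1 - a ^ n := by nlinarith [h2]
  have h4 : (∑ k ∈ Finset.range n, a ^ k) ≤ (1 - a)⁻¹ := by
    rw [← one_div, le_div_iff₀ h1a]
    nlinarith [pow_nonneg ha0 n]
  linarith

lemma distortion_entry {Ch a c : ℝ} (hc : 0 < c) (hCh : 0 < Ch) (ha0 : 0 < a) (ha1 : a < 1)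
    (hH : ∀ x ∈ SigmaA A, ∀ y ∈ SigmaA A, ∀ n : ℕ, (∀ k < n, x k = y k) →
      ∀ i j, |M x i j - M y i j| ≤ Ch * a ^ n)
    (hlow : ∀ x ∈ SigmaA A, ∀ i j, c ≤ M x i j) :
    ∀ n : ℕ, ∀ x ∈ SigmaA A, ∀ y ∈ SigmaA A, (∀ k < n, x k = y k) → ∀ i j,
      Mprod M x n i j ≤ (∏ k ∈ Finset.range n, (1 + (Ch / c) * a ^ (k + 1))) * Mprod M y n i j := by
  intro n
  induction n with
  | zero =>
      intro x _ y _ _ i j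
      simp [Mprod_zero]
  | succ nn ih =>
      intro x hx y hy hagree i j
      have hxs := shift_mem hx
      have hys := shift_mem hy
      have hagree' : ∀ k < nn, shift x k = shift y k := fun k hk => hagree (k + 1) (by omega)
      have hMle : ∀ i' j' : Fin d, M x i' j' ≤ (1 + (Ch / c) * a ^ (nn + 1)) * M y i' j' := by
        intro i' j'
        have hb := hH x hx y hy (nn + 1) hagree i' j'
        have h1 := (abs_le.mp hb).2
        have h2 := hlow y hy i' j'
        have h3 : Ch * a ^ (nn + 1) ≤ (Ch / c) * a ^ (nn + 1) * M y i' j' := by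
          have e : (Ch / c) * a ^ (nn + 1) * c = Ch * a ^ (nn + 1) := by
            field_simp
          have h4 : (Ch / c) * a ^ (nn + 1) * c ≤ (Ch / c) * a ^ (nn + 1) * M y i' j' :=
            mul_le_mul_of_nonneg_left h2
              (mul_nonneg (div_nonneg hCh.le hc.le) (pow_nonneg ha0.le _))
          linarith
        nlinarith
      have hPx := Mprod_nonneg (fun z hz i' j' => (lt_of_lt_of_le hc (hlow z hz i' j')).le)
        hxs nn
      have hPy := Mprod_nonneg (fun z hz i' j' => (lt_of_lt_of_le hc (hlow z hz i' j')).le)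
        hys nn
      have hlam : (0:ℝ) ≤ ∏ k ∈ Finset.range nn, (1 + (Ch / c) * a ^ (k + 1)) :=
        Finset.prod_nonneg fun k _ => by
          have := mul_nonneg (div_nonneg hCh.le hc.le) (pow_nonneg ha0.le (k + 1))
          linarith
      rw [Mprod_succ, Mprod_succ, Matrix.mul_apply, Matrix.mul_apply,
        Finset.prod_range_succ]
      calc (∑ k', M x i k' * Mprod M (shift x) nn k' j)
          ≤ ∑ k', ((1 + (Ch / c) * a ^ (nn + 1)) * M y i k')
              * ((∏ k ∈ Finset.range nn, (1 + (Ch / c) * a ^ (k + 1))) * Mprod M (shift y) nn k' j) := by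
            refine Finset.sum_le_sum fun k' _ => ?_
            refine mul_le_mul (hMle i k') (ih (shift x) hxs (shift y) hys hagree' k' j)
              (hPx k' j) ?_
            have h7 : (0:ℝ) ≤ M y i k' := (lt_of_lt_of_le hc (hlow y hy i k')).le
            have h8 : (0:ℝ) ≤ 1 + (Ch / c) * a ^ (nn + 1) := by
              have := mul_nonneg (div_nonneg hCh.le hc.le) (pow_nonneg ha0.le (nn + 1))
              linarith
            exact mul_nonneg h8 h7
        _ = ((∏ k ∈ Finset.range nn, (1 + (Ch / c) * a ^ (k + 1))) * (1 + (Ch / c) * a ^ (nn + 1)))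
              * ∑ k', M y i k' * Mprod M (shift y) nn k' j := by
            rw [Finset.mul_sum]
            congr 1
            ext k'
            ring

lemma prod_le_exp {a t : ℝ} (ht : 0 ≤ t) (ha0 : 0 ≤ a) (ha1 : a < 1) (n : ℕ) :
    ∏ k ∈ Finset.range n, (1 + t * a ^ (k + 1)) ≤ Real.exp (t * (1 - a)⁻¹) := by
  calc ∏ k ∈ Finset.range n, (1 + t * a ^ (k + 1))
      ≤ ∏ k ∈ Finset.range n, Real.exp (t * a ^ (k + 1)) := by
        refine Finset.prod_le_prod (fun k _ => by positivity) fun k _ => ?_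
        have := Real.add_one_le_exp (t * a ^ (k + 1))
        linarith
    _ = Real.exp (∑ k ∈ Finset.range n, t * a ^ (k + 1)) := (Real.exp_sum _ _).symm
    _ ≤ Real.exp (t * (1 - a)⁻¹) := by
        apply Real.exp_le_exp.mpr
        rw [← Finset.mul_sum]
        exact mul_le_mul_of_nonneg_left (geom_bound ha0 ha1 n) ht

end Aux

/-! ### Main theorem -/

/-- Lemma 2.3(i): `s_ℓ(q) ≈ s_{ℓ-p}(q)` for `ℓ > p`, where `A^p > 0`. -/
theorem sSum_approx_shift_p
    (m d : ℕ) (hm : 2 ≤ m) (hd : 1 ≤ d)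
    (A : Matrix (Fin m) (Fin m) ℕ) (hA01 : ZeroOne A)
    (p : ℕ) (hp : 1 ≤ p) (hAp : ∀ i j, 0 < (A ^ p) i j)
    (M : (ℕ → Fin m) → Matrix (Fin d) (Fin d) ℝ)
    (hpos : PosM A M) (hHolder : HolderM A M) (q : ℝ) :
    ∃ C : ℝ, 1 ≤ C ∧ ∀ ℓ : ℕ, p < ℓ →
      C⁻¹ * sSum A M q (ℓ - p) ≤ sSum A M q ℓ ∧
      sSum A M q ℓ ≤ C * sSum A M q (ℓ - p) := by
  classical
  haveI : NeZero m := ⟨by omega⟩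
  haveI : NeZero d := ⟨by omega⟩
  have hdR : (0:ℝ) < (d:ℝ) := by exact_mod_cast Nat.lt_of_lt_of_le Nat.zero_lt_one hd
  -- next-letter function
  have hnext : ∀ i : Fin m, ∃ j, A i j = 1 := exists_next hA01 hAp hp
  set nf : Fin m → Fin m := fun i => (hnext i).choose with hnf_def
  have hnf : ∀ i, A i (nf i) = 1 := fun i => (hnext i).choose_spec
  -- nonemptiness of the subshift
  have hne : (SigmaA A).Nonempty := by
    refine ⟨extSeq nf 0 (fun i : Fin 0 => 0), extSeq_mem nf hnf 0 _ ?_⟩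
    intro i h
    omega
  obtain ⟨c, hc, hlow⟩ := exists_lower hd hne hpos hHolder
  obtain ⟨K, hup⟩ := exists_upper hd hne hHolder
  have hK : 0 < K := by
    obtain ⟨x0, hx0⟩ := hne
    exact lt_of_lt_of_le hc ((hlow x0 hx0 0 0).trans (hup x0 hx0 0 0))
  have hMnn : ∀ x ∈ SigmaA A, ∀ i j, 0 ≤ M x i j :=
    fun x hx i j => (lt_of_lt_of_le hc (hlow x hx i j)).le
  have hnormnn : ∀ n : ℕ, ∀ x ∈ SigmaA A, 0 ≤ matNorm (Mprod M x n) := by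
    intro n x hx
    exact Finset.sum_nonneg fun i _ => Finset.sum_nonneg fun j _ => Mprod_nonneg hMnn hx n i j
  obtain ⟨Ch, hCh, a, ha0, ha1, hH⟩ := hHolder
  -- distortion constant
  set D := Real.exp ((Ch / c) * (1 - a)⁻¹) with hD_def
  have hD1 : 1 ≤ D := by
    rw [hD_def]
    apply Real.one_le_exp
    have h1a : (0:ℝ) < 1 - a := by linarith
    positivity
  have hD0 : 0 < D := lt_of_lt_of_le one_pos hD1
  have hdist : ∀ n : ℕ, ∀ x ∈ SigmaA A, ∀ y ∈ SigmaA A, (∀ k < n, x k = y k) →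
      matNorm (Mprod M x n) ≤ D * matNorm (Mprod M y n) := by
    intro n x hx y hy hag
    have hent := distortion_entry hc hCh ha0 ha1 hH hlow n x hx y hy hag
    have hlam : (0:ℝ) ≤ ∏ k ∈ Finset.range n, (1 + (Ch / c) * a ^ (k + 1)) :=
      Finset.prod_nonneg fun k _ => by
        have := mul_nonneg (div_nonneg hCh.le hc.le) (pow_nonneg ha0.le (k + 1))
        linarith
    have hprod : (∏ k ∈ Finset.range n, (1 + (Ch / c) * a ^ (k + 1))) ≤ D :=
      prod_le_exp (div_nonneg hCh.le hc.le) ha0.le ha1 n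
    have h1 : matNorm (Mprod M x n)
        ≤ (∏ k ∈ Finset.range n, (1 + (Ch / c) * a ^ (k + 1))) * matNorm (Mprod M y n) := by
      have h2 : matNorm (Mprod M x n) ≤ ∑ i, ∑ j,
          (∏ k ∈ Finset.range n, (1 + (Ch / c) * a ^ (k + 1))) * Mprod M y n i j :=
        Finset.sum_le_sum fun i _ => Finset.sum_le_sum fun j _ => hent i j
      have h3 : ∑ i, ∑ j,
          (∏ k ∈ Finset.range n, (1 + (Ch / c) * a ^ (k + 1))) * Mprod M y n i j
          = (∏ k ∈ Finset.range n, (1 + (Ch / c) * a ^ (k + 1))) * matNorm (Mprod M y n) := by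
        rw [matNorm, Finset.mul_sum]
        exact Finset.sum_congr rfl fun i _ => (Finset.mul_sum _ _ _).symm
      rw [h3] at h2
      exact h2
    calc matNorm (Mprod M x n)
        ≤ (∏ k ∈ Finset.range n, (1 + (Ch / c) * a ^ (k + 1))) * matNorm (Mprod M y n) := h1
      _ ≤ D * matNorm (Mprod M y n) :=
          mul_le_mul_of_nonneg_right hprod (hnormnn n y hy)
  -- positivity of norms of nonempty products
  have hnormpos : ∀ n : ℕ, 1 ≤ n → ∀ x ∈ SigmaA A, 0 < matNorm (Mprod M x n) := by
    intro n hn x hx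
    obtain ⟨nn, rfl⟩ : ∃ nn, n = nn + 1 := ⟨n - 1, by omega⟩
    have hb := (matNorm_bounds (fun i j => Mprod_entry_bounds hc hd hlow hup nn x hx i j)).1
    have hpos' : (0:ℝ) < (d:ℝ) ^ 2 * (c * (c * (d:ℝ)) ^ nn) :=
      mul_pos (pow_pos hdR 2) (mul_pos hc (pow_pos (mul_pos hc hdR) nn))
    linarith
  -- p = pp + 1
  obtain ⟨pp, rfl⟩ : ∃ pp, p = pp + 1 := ⟨p - 1, by omega⟩
  set D1 : ℝ := c * (c * (d:ℝ)) ^ pp with hD1_def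
  set D2 : ℝ := K * (K * (d:ℝ)) ^ pp with hD2_def
  have hD1pos : 0 < D1 := mul_pos hc (pow_pos (mul_pos hc hdR) pp)
  set g1 : ℝ := (d:ℝ) * D1 with hg1_def
  set g2 : ℝ := (d:ℝ) * D2 with hg2_def
  have hg1 : 0 < g1 := mul_pos hdR hD1pos
  -- the key multiplicative sandwich
  have hkey : ∀ n : ℕ, ∀ x ∈ SigmaA A,
      g1 * matNorm (Mprod M x n) ≤ matNorm (Mprod M x (n + (pp + 1))) ∧
      matNorm (Mprod M x (n + (pp + 1))) ≤ g2 * matNorm (Mprod M x n) := by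
    intro n x hx
    rw [Mprod_add x n (pp + 1)]
    have hB : ∀ i j, 0 ≤ Mprod M x n i j := Mprod_nonneg hMnn hx n
    have hB' : ∀ i j, D1 ≤ Mprod M (shift^[n] x) (pp + 1) i j ∧
        Mprod M (shift^[n] x) (pp + 1) i j ≤ D2 :=
      fun i j => Mprod_entry_bounds hc hd hlow hup pp (shift^[n] x) (shift_iter_mem hx n) i j
    exact matNorm_mul_bounds hD1pos.le hB hB'
  set E : ℝ := max (g1 ^ q) (g2 ^ q) with hE_def
  set F : ℝ := min (g1 ^ q) (g2 ^ q) with hF_def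
  have hg2 : 0 < g2 := by
    have h00 := hkey 0 hne.choose hne.choose_spec
    have := hnormpos (0 + (pp + 1)) (by omega) hne.choose hne.choose_spec
    nlinarith [hnormnn 0 hne.choose hne.choose_spec, h00.1, h00.2]
  have hF : 0 < F := lt_min (Real.rpow_pos_of_pos hg1 q) (Real.rpow_pos_of_pos hg2 q)
  have hE : 0 < E := lt_of_lt_of_le hF (min_le_max)
  set Dq : ℝ := max ((D⁻¹) ^ q) (D ^ q) with hDq_def
  have hDq : 0 < Dq := lt_of_lt_of_le (Real.rpow_pos_of_pos (inv_pos.mpr hD0) q) (le_max_left _ _)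
  -- pointwise q-power sandwich
  have hsand : ∀ n : ℕ, 1 ≤ n → ∀ x ∈ SigmaA A,
      F * matNorm (Mprod M x n) ^ q ≤ matNorm (Mprod M x (n + (pp + 1))) ^ q ∧
      matNorm (Mprod M x (n + (pp + 1))) ^ q ≤ E * matNorm (Mprod M x n) ^ q := by
    intro n hn x hx
    have hv := hnormpos n hn x hx
    have hk := hkey n x hx
    exact rpow_sandwich hg1 hv hk.1 hk.2
  -- nonnegativity of sWord
  have hsw_nonneg : ∀ {n : ℕ} (J : Fin n → Fin m), 0 ≤ sWord A M q J := by
    intro n J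
    apply Real.sSup_nonneg
    rintro v ⟨x, hxc, rfl⟩
    exact Real.rpow_nonneg (hnormnn n x hxc.1) q
  have hssum_nonneg : ∀ n : ℕ, 0 ≤ sSum A M q n :=
    fun n => Finset.sum_nonneg fun J _ => hsw_nonneg J
  -- boundedness of sWord image sets
  have hsw_bdd : ∀ n : ℕ, 1 ≤ n → ∀ J : Fin n → Fin m,
      BddAbove ((fun x => matNorm (Mprod M x n) ^ q) '' cylinder A J) := by
    intro n hn J
    obtain ⟨nn, rfl⟩ : ∃ nn, n = nn + 1 := ⟨n - 1, by omega⟩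
    refine ⟨max (((d:ℝ) ^ 2 * (c * (c * (d:ℝ)) ^ nn)) ^ q)
      (((d:ℝ) ^ 2 * (K * (K * (d:ℝ)) ^ nn)) ^ q), ?_⟩
    rintro v ⟨x, hxc, rfl⟩
    have hb := matNorm_bounds (fun i j => Mprod_entry_bounds hc hd hlow hup nn x hxc.1 i j)
    have hρ : (0:ℝ) < (d:ℝ) ^ 2 * (c * (c * (d:ℝ)) ^ nn) :=
      mul_pos (pow_pos hdR 2) (mul_pos hc (pow_pos (mul_pos hc hdR) nn))
    have hs := rpow_sandwich (q := q) hρ one_pos (by simpa using hb.1) (by simpa using hb.2)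
    simpa [Real.one_rpow] using hs.2
  -- the constant
  refine ⟨E * (m:ℝ) ^ (pp + 1) + Dq / F + 1, ?_, ?_⟩
  · have h1 : 0 ≤ E * (m:ℝ) ^ (pp + 1) := mul_nonneg hE.le (by positivity)
    have h2 : 0 ≤ Dq / F := div_nonneg hDq.le hF.le
    linarith
  intro ℓ hℓ
  obtain ⟨n, rfl⟩ : ∃ n, ℓ = n + (pp + 1) := ⟨ℓ - (pp + 1), by omega⟩
  have hn : 1 ≤ n := by omega
  have hnp : n + (pp + 1) - (pp + 1) = n := by omega
  rw [hnp]
  set C : ℝ := E * (m:ℝ) ^ (pp + 1) + Dq / F + 1 with hC_def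
  have hC : 0 < C := by
    have h1 : 0 ≤ E * (m:ℝ) ^ (pp + 1) := mul_nonneg hE.le (by positivity)
    have h2 : 0 ≤ Dq / F := div_nonneg hDq.le hF.le
    rw [hC_def]; linarith
  -- prefix map
  set pre : (Fin (n + (pp + 1)) → Fin m) → (Fin n → Fin m) :=
    fun I i => I ⟨(i : ℕ), by omega⟩ with hpre_def
  -- ==================== upper bound ====================
  have hup_word : ∀ I ∈ admWords A (n + (pp + 1)),
      sWord A M q I ≤ E * sWord A M q (pre I) := by
    intro I hI
    have hnn : 0 ≤ E * sWord A M q (pre I) := mul_nonneg hE.le (hsw_nonneg _)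
    apply Real.sSup_le _ hnn
    rintro v ⟨x, hxc, rfl⟩
    have hxSig := hxc.1
    have h1 := (hsand n hn x hxSig).2
    have hx_pre : x ∈ cylinder A (pre I) := by
      refine ⟨hxSig, fun i => ?_⟩
      have := hxc.2 ⟨(i : ℕ), by omega⟩
      simpa [hpre_def] using this
    have h2 : matNorm (Mprod M x n) ^ q ≤ sWord A M q (pre I) :=
      le_csSup (hsw_bdd n hn (pre I)) ⟨x, hx_pre, rfl⟩
    calc matNorm (Mprod M x (n + (pp + 1))) ^ q ≤ E * matNorm (Mprod M x n) ^ q := h1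
      _ ≤ E * sWord A M q (pre I) := mul_le_mul_of_nonneg_left h2 hE.le
  have hmaps : ∀ I ∈ admWords A (n + (pp + 1)), pre I ∈ admWords A n := by
    intro I hI
    simp only [admWords, Finset.mem_filter, Finset.mem_univ, true_and] at hI ⊢
    intro i h
    exact hI i (by omega)
  have hcard : ∀ J : Fin n → Fin m,
      (((admWords A (n + (pp + 1))).filter fun I => pre I = J)).card ≤ m ^ (pp + 1) := by
    intro J
    have hinj2 : Set.InjOn (fun I : Fin (n + (pp + 1)) → Fin m =>
        (fun i : Fin (pp + 1) => I ⟨n + (i : ℕ), by omega⟩))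
        ((admWords A (n + (pp + 1))).filter fun I => pre I = J) := by
      intro I1 h1 I2 h2 heq
      have hJ1 : pre I1 = J := (Finset.mem_filter.mp h1).2
      have hJ2 : pre I2 = J := (Finset.mem_filter.mp h2).2
      funext k
      rcases lt_or_ge (k : ℕ) n with hk | hk
      · have e1 : I1 ⟨(k : ℕ), by omega⟩ = J ⟨(k : ℕ), hk⟩ := congrFun hJ1 ⟨(k : ℕ), hk⟩
        have e2 : I2 ⟨(k : ℕ), by omega⟩ = J ⟨(k : ℕ), hk⟩ := congrFun hJ2 ⟨(k : ℕ), hk⟩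
        have ek : (⟨(k : ℕ), by omega⟩ : Fin (n + (pp + 1))) = k := by
          apply Fin.ext; rfl
        rw [ek] at e1 e2
        rw [e1, e2]
      · have e3 := congrFun heq ⟨(k : ℕ) - n, by omega⟩
        simp only at e3
        have ek : (⟨n + ((k : ℕ) - n), by omega⟩ : Fin (n + (pp + 1))) = k := by
          apply Fin.ext
          simp only
          omega
        rw [ek] at e3
        exact e3
    have := Finset.card_le_card_of_injOn _ (fun I _ => Finset.mem_univ _) hinj2
    calc (((admWords A (n + (pp + 1))).filter fun I => pre I = J)).card
        ≤ (Finset.univ : Finset (Fin (pp + 1) → Fin m)).card := this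
      _ = m ^ (pp + 1) := by
        rw [Finset.card_univ, Fintype.card_fun, Fintype.card_fin, Fintype.card_fin]
  have hfiber : (∑ I ∈ admWords A (n + (pp + 1)), sWord A M q (pre I))
      ≤ (m:ℝ) ^ (pp + 1) * sSum A M q n := by
    rw [← Finset.sum_fiberwise_of_maps_to hmaps (fun I => sWord A M q (pre I))]
    have hterm : ∀ J ∈ admWords A n,
        (∑ I ∈ (admWords A (n + (pp + 1))).filter fun I => pre I = J, sWord A M q (pre I))
        ≤ (m:ℝ) ^ (pp + 1) * sWord A M q J := by
      intro J hJ
      have h1 : (∑ I ∈ (admWords A (n + (pp + 1))).filter fun I => pre I = J,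
          sWord A M q (pre I))
          = (((admWords A (n + (pp + 1))).filter fun I => pre I = J)).card • sWord A M q J := by
        rw [← Finset.sum_const]
        exact Finset.sum_congr rfl fun I hI => by
          rw [(Finset.mem_filter.mp hI).2]
      rw [h1, nsmul_eq_mul]
      apply mul_le_mul_of_nonneg_right _ (hsw_nonneg J)
      exact_mod_cast Nat.cast_le.mpr (hcard J)
    calc (∑ J ∈ admWords A n, ∑ I ∈ (admWords A (n + (pp + 1))).filter fun I => pre I = J,
          sWord A M q (pre I))
        ≤ ∑ J ∈ admWords A n, (m:ℝ) ^ (pp + 1) * sWord A M q J :=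
          Finset.sum_le_sum hterm
      _ = (m:ℝ) ^ (pp + 1) * sSum A M q n := by
          rw [sSum, Finset.mul_sum]
  have hupper : sSum A M q (n + (pp + 1)) ≤ C * sSum A M q n := by
    have h1 : sSum A M q (n + (pp + 1))
        ≤ ∑ I ∈ admWords A (n + (pp + 1)), E * sWord A M q (pre I) :=
      Finset.sum_le_sum hup_word
    have h2 : (∑ I ∈ admWords A (n + (pp + 1)), E * sWord A M q (pre I))
        = E * ∑ I ∈ admWords A (n + (pp + 1)), sWord A M q (pre I) :=
      (Finset.mul_sum _ _ _).symm
    have h3 : E * (∑ I ∈ admWords A (n + (pp + 1)), sWord A M q (pre I))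
        ≤ E * ((m:ℝ) ^ (pp + 1) * sSum A M q n) :=
      mul_le_mul_of_nonneg_left hfiber hE.le
    have h4 : E * ((m:ℝ) ^ (pp + 1) * sSum A M q n) ≤ C * sSum A M q n := by
      rw [← mul_assoc]
      apply mul_le_mul_of_nonneg_right _ (hssum_nonneg n)
      have h5 : 0 ≤ Dq / F := div_nonneg hDq.le hF.le
      rw [hC_def]
      linarith
    calc sSum A M q (n + (pp + 1))
        ≤ ∑ I ∈ admWords A (n + (pp + 1)), E * sWord A M q (pre I) := h1
      _ = E * ∑ I ∈ admWords A (n + (pp + 1)), sWord A M q (pre I) := h2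
      _ ≤ E * ((m:ℝ) ^ (pp + 1) * sSum A M q n) := h3
      _ ≤ C * sSum A M q n := h4
  -- ==================== lower bound ====================
  set extW : (Fin n → Fin m) → (Fin (n + (pp + 1)) → Fin m) :=
    fun J i => extSeq nf 0 J (i : ℕ) with hextW_def
  have hadm_of : ∀ J ∈ admWords A n, Adm A J := by
    intro J hJ
    simpa [admWords] using hJ
  have hextSig : ∀ J ∈ admWords A n, extSeq nf 0 J ∈ SigmaA A :=
    fun J hJ => extSeq_mem nf hnf 0 J (hadm_of J hJ)
  have hextAdm : ∀ J ∈ admWords A n, extW J ∈ admWords A (n + (pp + 1)) := by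
    intro J hJ
    simp only [admWords, Finset.mem_filter, Finset.mem_univ, true_and]
    intro i h
    exact hextSig J hJ i
  have hcylx : ∀ J ∈ admWords A n, extSeq nf 0 J ∈ cylinder A (extW J) :=
    fun J hJ => ⟨hextSig J hJ, fun i => rfl⟩
  have hlow_word : ∀ J ∈ admWords A n,
      sWord A M q J ≤ (Dq / F) * sWord A M q (extW J) := by
    intro J hJ
    have hxSig := hextSig J hJ
    have hvpos := hnormpos n hn _ hxSig
    have h1 := (hsand n hn _ hxSig).1
    have h2 : matNorm (Mprod M (extSeq nf 0 J) (n + (pp + 1))) ^ q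
        ≤ sWord A M q (extW J) :=
      le_csSup (hsw_bdd (n + (pp + 1)) (by omega) (extW J)) ⟨_, hcylx J hJ, rfl⟩
    have h3 : sWord A M q J ≤ Dq * matNorm (Mprod M (extSeq nf 0 J) n) ^ q := by
      apply Real.sSup_le _ (mul_nonneg hDq.le (Real.rpow_nonneg (hnormnn n _ hxSig) q))
      rintro v ⟨y, hyc, rfl⟩
      have hagree : ∀ k < n, y k = extSeq nf 0 J k := by
        intro k hk
        rw [hyc.2 ⟨k, hk⟩, extSeq_agree nf 0 J k hk]
      have d1 : matNorm (Mprod M y n) ≤ D * matNorm (Mprod M (extSeq nf 0 J) n) :=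
        hdist n y hyc.1 _ hxSig hagree
      have d2 : matNorm (Mprod M (extSeq nf 0 J) n) ≤ D * matNorm (Mprod M y n) :=
        hdist n _ hxSig y hyc.1 (fun k hk => (hagree k hk).symm)
      have dlow : D⁻¹ * matNorm (Mprod M (extSeq nf 0 J) n) ≤ matNorm (Mprod M y n) := by
        rw [inv_mul_le_iff₀ hD0]
        exact d2
      have hs := rpow_sandwich (q := q) (inv_pos.mpr hD0) hvpos dlow d1
      exact hs.2
    have h4 : Dq * matNorm (Mprod M (extSeq nf 0 J) n) ^ q
        = (Dq / F) * (F * matNorm (Mprod M (extSeq nf 0 J) n) ^ q) := by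
      rw [← mul_assoc, div_mul_cancel₀ _ hF.ne']
    calc sWord A M q J ≤ Dq * matNorm (Mprod M (extSeq nf 0 J) n) ^ q := h3
      _ = (Dq / F) * (F * matNorm (Mprod M (extSeq nf 0 J) n) ^ q) := h4
      _ ≤ (Dq / F) * matNorm (Mprod M (extSeq nf 0 J) (n + (pp + 1))) ^ q :=
          mul_le_mul_of_nonneg_left h1 (div_nonneg hDq.le hF.le)
      _ ≤ (Dq / F) * sWord A M q (extW J) :=
          mul_le_mul_of_nonneg_left h2 (div_nonneg hDq.le hF.le)
  have hinj : Set.InjOn extW (admWords A n) := by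
    intro J1 h1 J2 h2 heq
    funext i
    have e1 : extW J1 ⟨(i : ℕ), by omega⟩ = extW J2 ⟨(i : ℕ), by omega⟩ := by rw [heq]
    have e2 : extW J1 ⟨(i : ℕ), by omega⟩ = J1 i := by
      show extSeq nf 0 J1 (i : ℕ) = J1 i
      rw [extSeq_agree nf 0 J1 (i : ℕ) i.isLt]
    have e3 : extW J2 ⟨(i : ℕ), by omega⟩ = J2 i := by
      show extSeq nf 0 J2 (i : ℕ) = J2 i
      rw [extSeq_agree nf 0 J2 (i : ℕ) i.isLt]
    rw [e2, e3] at e1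
    exact e1
  have hsum_low : sSum A M q n ≤ (Dq / F) * sSum A M q (n + (pp + 1)) := by
    have h1 : sSum A M q n ≤ ∑ J ∈ admWords A n, (Dq / F) * sWord A M q (extW J) :=
      Finset.sum_le_sum hlow_word
    have h2 : (∑ J ∈ admWords A n, (Dq / F) * sWord A M q (extW J))
        = (Dq / F) * ∑ J ∈ admWords A n, sWord A M q (extW J) :=
      (Finset.mul_sum _ _ _).symm
    have h3 : (∑ J ∈ admWords A n, sWord A M q (extW J)) ≤ sSum A M q (n + (pp + 1)) := by
      rw [← Finset.sum_image (fun J hJ J' hJ' h => hinj hJ hJ' h)]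
      apply Finset.sum_le_sum_of_subset_of_nonneg
      · intro I hI
        obtain ⟨J, hJ, rfl⟩ := Finset.mem_image.mp hI
        exact hextAdm J hJ
      · intro I _ _
        exact hsw_nonneg I
    calc sSum A M q n ≤ ∑ J ∈ admWords A n, (Dq / F) * sWord A M q (extW J) := h1
      _ = (Dq / F) * ∑ J ∈ admWords A n, sWord A M q (extW J) := h2
      _ ≤ (Dq / F) * sSum A M q (n + (pp + 1)) :=
          mul_le_mul_of_nonneg_left h3 (div_nonneg hDq.le hF.le)
  constructor
  · -- C⁻¹ * sSum n ≤ sSum (n + p)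
    have hCinv : 0 < C⁻¹ := inv_pos.mpr hC
    have h5 : C⁻¹ * sSum A M q n ≤ C⁻¹ * ((Dq / F) * sSum A M q (n + (pp + 1))) :=
      mul_le_mul_of_nonneg_left hsum_low hCinv.le
    have h6 : C⁻¹ * ((Dq / F) * sSum A M q (n + (pp + 1))) ≤ sSum A M q (n + (pp + 1)) := by
      rw [← mul_assoc]
      have h7 : C⁻¹ * (Dq / F) ≤ 1 := by
        rw [inv_mul_le_iff₀ hC, mul_one]
        have h8 : 0 ≤ E * (m:ℝ) ^ (pp + 1) := mul_nonneg hE.le (by positivity)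
        rw [hC_def]
        linarith
      nlinarith [hssum_nonneg (n + (pp + 1))]
    linarith
  · exact hupper
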